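/- arXiv:1502.00435 — 3 statements merged into one kernel-verified Lean document; each statement's English description precedes it below -/
import Mathlib

section
/- Let A be a d×d real symmetric matrix, with d = m + n + k, and write each v ∈ ℝᵈ as v = v_m ⊕ v_n ⊕ v_k with v_i ∈ ℝⁱ. Suppose ⟨Av, v⟩ ≥ 2‖v_m‖·‖v_n‖ for all v ∈ ℝᵈ. Then there exists τ > 0 such that ⟨Av, v⟩ ≥ τ‖v_m‖² + (1/τ)‖v_n‖² for all v ∈ ℝᵈ. -/
open Finset
noncomputable section

/-- The Euclidean norm of the block of coordinates `i` of `v` with `a ≤ i < b`. -/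
def blockNorm {d : ℕ} (v : Fin d → ℝ) (a b : ℕ) : ℝ :=
  Real.sqrt (∑ i ∈ Finset.univ.filter (fun i : Fin d => a ≤ (i : ℕ) ∧ (i : ℕ) < b), v i ^ 2)

/-!
Write q v = ⟨Av, v⟩, a v = ‖v_m‖², b v = ‖v_n‖², and for τ > 0 put G_τ = τ²a − τq + b and
H_τ = τ²a − b; a good τ is one with G_τ ≤ 0 everywhere. On the zero set of H_τ, i.e. where
‖v_n‖ = τ‖v_m‖, the hypothesis says exactly G_τ ≤ 0. If G_τ were positive at two vectors on
which H_τ has opposite signs, then, after replacing one of them by its negative so that the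
cross term of G_τ is nonnegative, G_τ would stay positive along the segment joining them, while
H_τ vanishes somewhere on it. Hence the τ for which G_τ is positive somewhere on {H_τ < 0},
resp. on {H_τ > 0}, form two disjoint open subsets of (0, ∞); the first contains small τ (test
on a vector with v_m = 0), the second large τ (test on one with v_n = 0). By connectedness some
τ > 0 lies in neither, and it is good.
-/

open Filter Topology

theorem eventually_nhdsGT_zero_quadratic {α β γ : ℝ} (hβ : 0 < β) :
    ∀ᶠ τ in 𝓝[>] 0, 0 < τ ^ 2 * α - τ * γ + β ∧ τ ^ 2 * α - β < 0 := by
  have h₁ : Tendsto (fun τ : ℝ => τ ^ 2 * α - τ * γ + β) (𝓝 0) (𝓝 β) := by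
    simpa using ((by fun_prop : Continuous fun τ : ℝ => τ ^ 2 * α - τ * γ + β).tendsto 0)
  have h₂ : Tendsto (fun τ : ℝ => τ ^ 2 * α - β) (𝓝 0) (𝓝 (-β)) := by
    simpa using ((by fun_prop : Continuous fun τ : ℝ => τ ^ 2 * α - β).tendsto 0)
  exact ((h₁.eventually (lt_mem_nhds hβ)).and
    (h₂.eventually (gt_mem_nhds (neg_neg_of_pos hβ)))).filter_mono nhdsWithin_le_nhds

theorem exists_pos_quadratic_pos_of_large {α β γ : ℝ} (hα : 0 < α) :
    ∃ τ > 0, 0 < τ ^ 2 * α - τ * γ + β ∧ 0 < τ ^ 2 * α - β := by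
  obtain ⟨σ, ⟨hG, hH⟩, hσ : 0 < σ⟩ :=
    ((eventually_nhdsGT_zero_quadratic (α := β) (γ := γ) hα).and self_mem_nhdsWithin).exists
  refine ⟨σ⁻¹, inv_pos.2 hσ, ?_, ?_⟩
  · have : σ⁻¹ ^ 2 * α - σ⁻¹ * γ + β = σ⁻¹ ^ 2 * (σ ^ 2 * β - σ * γ + α) := by
      field_simp; ring
    rw [this]; positivity
  · have : σ⁻¹ ^ 2 * α - β = σ⁻¹ ^ 2 * -(σ ^ 2 * β - α) := by
      field_simp; ring
    rw [this]; exact mul_pos (by positivity) (neg_pos.2 hH)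

namespace QuadraticMap

variable {V : Type*} [AddCommGroup V] [Module ℝ V]

theorem map_lineMap (Q : QuadraticForm ℝ V) (v w : V) (t : ℝ) :
    Q (AffineMap.lineMap v w t) =
      (1 - t) ^ 2 * Q v + (1 - t) * t * polar Q v w + t ^ 2 * Q w := by
  rw [AffineMap.lineMap_apply_module, QuadraticMap.map_add Q, QuadraticMap.map_smul,
    QuadraticMap.map_smul, polar_smul_left, polar_smul_right]
  simp only [smul_eq_mul]
  ring

theorem continuous_map_lineMap (Q : QuadraticForm ℝ V) (v w : V) :
    Continuous fun t : ℝ => Q (AffineMap.lineMap v w t) := by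
  simp only [map_lineMap]
  fun_prop

theorem exists_eq_zero_and_pos_of_pos_of_pos (G H : QuadraticForm ℝ V) {v w : V}
    (hGv : 0 < G v) (hGw : 0 < G w) (hHv : H v < 0) (hHw : 0 < H w) :
    ∃ u, H u = 0 ∧ 0 < G u := by
  wlog hvw : 0 ≤ polar G v w generalizing w
  · exact this (w := -w) (by rwa [QuadraticMap.map_neg]) (by rwa [QuadraticMap.map_neg])
      (by rw [polar_neg_right]; linarith)
  obtain ⟨t, ⟨ht0, ht1⟩, hHt⟩ :
      (0 : ℝ) ∈ (fun t => H (AffineMap.lineMap v w t)) '' Set.Icc 0 1 :=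
    intermediate_value_Icc zero_le_one (continuous_map_lineMap H v w).continuousOn
      (by simpa using ⟨hHv.le, hHw.le⟩)
  refine ⟨_, hHt, ?_⟩
  rw [map_lineMap]
  rcases ht0.eq_or_lt with rfl | ht0
  · simpa using hGv
  · have hcross : 0 ≤ (1 - t) * t * polar G v w :=
      mul_nonneg (mul_nonneg (sub_nonneg.2 ht1) ht0.le) hvw
    positivity

theorem sq_mul_sub_mul_add_nonpos_of_eq {q a b : QuadraticForm ℝ V}
    (h : ∀ v, 2 * √(a v) * √(b v) ≤ q v) {τ : ℝ} (hτ : 0 < τ) {v : V}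
    (hv : b v = τ ^ 2 * a v) : τ ^ 2 * a v - τ * q v + b v ≤ 0 := by
  have hqv := h v
  rcases le_or_gt 0 (a v) with hav | hav
  · rw [hv, Real.sqrt_mul (sq_nonneg τ), Real.sqrt_sq hτ.le] at hqv
    nlinarith [Real.sq_sqrt hav]
  · rw [Real.sqrt_eq_zero_of_nonpos hav.le] at hqv
    nlinarith

theorem exists_mul_add_inv_mul_le (q a b : QuadraticForm ℝ V) (ha : ∃ v, 0 < a v)
    (hb : ∃ v, 0 < b v) (h : ∀ v, 2 * √(a v) * √(b v) ≤ q v) :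
    ∃ τ > 0, ∀ v, τ * a v + τ⁻¹ * b v ≤ q v := by
  set S := {τ : ℝ | ∃ v, 0 < τ ^ 2 * a v - τ * q v + b v ∧ τ ^ 2 * a v - b v < 0}
  set L := {τ : ℝ | ∃ v, 0 < τ ^ 2 * a v - τ * q v + b v ∧ 0 < τ ^ 2 * a v - b v}
  have hS : IsOpen S := by
    simp only [S, Set.ofPred_exists, Set.ofPred_and]
    exact isOpen_iUnion fun v => (isOpen_lt continuous_const (by fun_prop)).inter
      (isOpen_lt (by fun_prop) continuous_const)
  have hL : IsOpen L := by
    simp only [L, Set.ofPred_exists, Set.ofPred_and]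
    exact isOpen_iUnion fun v => (isOpen_lt continuous_const (by fun_prop)).inter
      (isOpen_lt continuous_const (by fun_prop))
  have hSL : ∀ τ > 0, τ ∈ S → τ ∉ L := by
    rintro τ hτ ⟨v, hGv, hHv⟩ ⟨w, hGw, hHw⟩
    obtain ⟨u, hHu, hGu⟩ := exists_eq_zero_and_pos_of_pos_of_pos (τ ^ 2 • a - τ • q + b)
      (τ ^ 2 • a - b) (v := v) (w := w) (by simpa using hGv) (by simpa using hGw)
      (by simpa using hHv) (by simpa using hHw)
    simp only [add_apply, sub_apply, smul_apply, smul_eq_mul] at hHu hGu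
    exact (sq_mul_sub_mul_add_nonpos_of_eq h hτ (by linarith)).not_gt hGu
  by_contra hne
  push Not at hne
  have hcover : Set.Ioi 0 ⊆ S ∪ L := by
    intro τ (hτ : 0 < τ)
    obtain ⟨v, hv⟩ := hne τ hτ
    have hG : 0 < τ ^ 2 * a v - τ * q v + b v := by
      have := mul_lt_mul_of_pos_left hv hτ
      field_simp at this
      linarith
    rcases lt_trichotomy (τ ^ 2 * a v - b v) 0 with hH | hH | hH
    · exact Or.inl ⟨v, hG, hH⟩
    · exact absurd (sq_mul_sub_mul_add_nonpos_of_eq h hτ (by linarith)) hG.not_ge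
    · exact Or.inr ⟨v, hG, hH⟩
  obtain ⟨e, he⟩ := hb
  obtain ⟨τ₀, he₀, hτ₀ : 0 < τ₀⟩ :=
    ((eventually_nhdsGT_zero_quadratic (α := a e) (γ := q e) he).and self_mem_nhdsWithin).exists
  obtain ⟨f, hf⟩ := ha
  obtain ⟨τ₁, hτ₁, hf₁⟩ := exists_pos_quadratic_pos_of_large (β := b f) (γ := q f) hf
  obtain ⟨τ, hτ, hτS, hτL⟩ :=
    isPreconnected_Ioi S L hS hL hcover ⟨τ₀, hτ₀, e, he₀⟩ ⟨τ₁, hτ₁, f, hf₁⟩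
  exact hSL τ hτ hτS hτL

end QuadraticMap

theorem Matrix.toQuadraticForm'_apply_eq_sum {ι R : Type*} [Fintype ι] [DecidableEq ι]
    [CommRing R] (A : Matrix ι ι R) (v : ι → R) :
    A.toQuadraticForm' v = ∑ i, A.mulVec v i * v i := by
  simp [Matrix.toQuadraticForm', Matrix.toLinearMap₂'_apply', dotProduct, mul_comm]

def blockNormSq (d a b : ℕ) : QuadraticForm ℝ (Fin d → ℝ) :=
  ∑ i ∈ univ.filter (fun i : Fin d => a ≤ (i : ℕ) ∧ (i : ℕ) < b), QuadraticMap.proj i i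

theorem blockNormSq_apply {d a b : ℕ} (v : Fin d → ℝ) :
    blockNormSq d a b v = blockNorm v a b ^ 2 := by
  rw [blockNorm, Real.sq_sqrt (sum_nonneg fun i _ => sq_nonneg (v i))]
  simp [blockNormSq, QuadraticMap.proj_apply, sq]

theorem sqrt_blockNormSq {d a b : ℕ} (v : Fin d → ℝ) :
    √(blockNormSq d a b v) = blockNorm v a b := by
  rw [blockNormSq_apply]
  exact Real.sqrt_sq (Real.sqrt_nonneg _)

theorem blockNormSq_single_pos {d a b : ℕ} {j : Fin d} (ha : a ≤ j) (hb : j < b) :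
    0 < blockNormSq d a b (Pi.single j 1) := by
  simp [blockNormSq, QuadraticMap.proj_apply, Pi.single_apply, ha, hb]

theorem quadratic_form_block_bound_general (m n k : ℕ) (hm : 1 ≤ m) (hn : 1 ≤ n)
    (A : Matrix (Fin (m + n + k)) (Fin (m + n + k)) ℝ)
    (h : ∀ v : Fin (m + n + k) → ℝ,
      2 * blockNorm v 0 m * blockNorm v m (m + n) ≤ ∑ i, A.mulVec v i * v i) :
    ∃ τ > (0 : ℝ), ∀ v : Fin (m + n + k) → ℝ,
      τ * blockNorm v 0 m ^ 2 + τ⁻¹ * blockNorm v m (m + n) ^ 2 ≤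
        ∑ i, A.mulVec v i * v i := by
  obtain ⟨τ, hτ, hle⟩ := QuadraticMap.exists_mul_add_inv_mul_le A.toQuadraticForm'
    (blockNormSq _ 0 m) (blockNormSq _ m (m + n))
    ⟨Pi.single ⟨0, by omega⟩ 1, blockNormSq_single_pos le_rfl (by simp; omega)⟩
    ⟨Pi.single ⟨m, by omega⟩ 1, blockNormSq_single_pos le_rfl (by simp; omega)⟩
    (by simpa [sqrt_blockNormSq, Matrix.toQuadraticForm'_apply_eq_sum] using h)
  refine ⟨τ, hτ, fun v => ?_⟩
  simpa [blockNormSq_apply, Matrix.toQuadraticForm'_apply_eq_sum] using hle v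

/-- if a symmetric `d×d` matrix satisfies `⟨Av,v⟩ ≥ 2‖v_m‖‖v_n‖` for all `v`,
where `v = v_m ⊕ v_n ⊕ v_k`, then there is `τ > 0` with
`⟨Av,v⟩ ≥ τ‖v_m‖² + τ⁻¹‖v_n‖²` for all `v`. -/
theorem quadratic_form_block_bound (m n k : ℕ) (hm : 1 ≤ m) (hn : 1 ≤ n)
    (A : Matrix (Fin (m + n + k)) (Fin (m + n + k)) ℝ) (hA : A.IsSymm)
    (h : ∀ v : Fin (m + n + k) → ℝ,
      2 * blockNorm v 0 m * blockNorm v m (m + n) ≤ ∑ i, A.mulVec v i * v i) :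
    ∃ τ > (0 : ℝ), ∀ v : Fin (m + n + k) → ℝ,
      τ * blockNorm v 0 m ^ 2 + τ⁻¹ * blockNorm v m (m + n) ^ 2 ≤
        ∑ i, A.mulVec v i * v i :=
  quadratic_form_block_bound_general m n k hm hn A h
end
end

section
/- Let w ∈ A₂ᵈ on ℝ. For each dyadic interval I set c_I² = |I| · ((w_{I₋} − w_{I₊})/(2w_I))². Then for every dyadic interval J: (1/|J|) ∑_{I ∈ 𝒟(J)} c_I² ≤ 2 log [w]_{A₂ᵈ}; i.e. {c_I²} is a Carleson sequence with constant 2 log [w]_{A₂ᵈ}. -/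
open MeasureTheory Set Filter
noncomputable section

/-- The dyadic interval of generation `n` and position `k`: `[k·2⁻ⁿ, (k+1)·2⁻ⁿ)`. -/
def dI (n k : ℤ) : Set ℝ := Set.Ico ((k : ℝ) * 2 ^ (-n)) (((k : ℝ) + 1) * 2 ^ (-n))

/-- The length `2⁻ⁿ` of a dyadic interval of generation `n`. -/
def len (n : ℤ) : ℝ := 2 ^ (-n)

/-- The average of `w` over the dyadic interval of generation `n`, position `k`. -/
def avg (w : ℝ → ℝ) (n k : ℤ) : ℝ := (2 : ℝ) ^ (n : ℤ) * ∫ x in dI n k, w x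

/-- Average over the left half. -/
def avgL (w : ℝ → ℝ) (n k : ℤ) : ℝ := avg w (n + 1) (2 * k)

/-- Average over the right half. -/
def avgR (w : ℝ → ℝ) (n k : ℤ) : ℝ := avg w (n + 1) (2 * k + 1)

/-- The coefficient `c_I = √|I| (w_{I₋} − w_{I₊})/(2 w_I)`. -/
def cI (w : ℝ → ℝ) (n k : ℤ) : ℝ :=
  Real.sqrt (len n) * (avgL w n k - avgR w n k) / (2 * avg w n k)

/-- The pointwise inverse `w⁻¹` of a weight. -/
def inv' (w : ℝ → ℝ) : ℝ → ℝ := fun x => (w x)⁻¹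

/-- The dyadic A₂ characteristic `[w]_{A₂ᵈ} = sup_Q (⨍_Q w)(⨍_Q w⁻¹)`. -/
def A2d (w : ℝ → ℝ) : ℝ := ⨆ p : ℤ × ℤ, avg w p.1 p.2 * avg (inv' w) p.1 p.2

/-- The Haar function of the dyadic interval of generation `n`, position `k`. -/
def haar (n k : ℤ) : ℝ → ℝ := fun x =>
  (Real.sqrt (len n))⁻¹ *
    ((dI (n + 1) (2 * k + 1)).indicator (fun _ => (1 : ℝ)) x -
      (dI (n + 1) (2 * k)).indicator (fun _ => (1 : ℝ)) x)

/-- The measure `w dx`. -/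
def wMeas (w : ℝ → ℝ) : Measure ℝ := volume.withDensity fun x => ENNReal.ofReal (w x)


/-!
The Bellman function `Φ(I) = |I| log (w_I (w⁻¹)_I)` is nonnegative (Cauchy–Schwarz) and at most
`|I| log [w]_{A₂ᵈ}`. Since `w_I` and `(w⁻¹)_I` are the means of their values on the halves of `I`,
concavity of `log` in the quantitative form `log a + log b + ((a - b)/(a + b))² ≤ 2 log ((a + b)/2)`
gives `c_I² ≤ 2 (Φ(I) - Φ(I₋) - Φ(I₊))`. Summing these defects over the dyadic subintervals of `J`
telescopes, so every finite partial sum of `c_I²` is at most `2 Φ(J) ≤ 2 |J| log [w]_{A₂ᵈ}`.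
-/

lemma len_pos (n : ℤ) : 0 < len n := zpow_pos two_pos _

lemma len_add_one (n : ℤ) : len (n + 1) = len n / 2 := by
  rw [len, len, neg_add, zpow_add₀ two_ne_zero, zpow_neg_one]
  ring

lemma two_zpow_mul_len (n : ℤ) : (2 : ℝ) ^ n * len n = 1 := by
  rw [len, ← zpow_add₀ two_ne_zero, add_neg_cancel, zpow_zero]

lemma volume_dI (n k : ℤ) : volume (dI n k) = ENNReal.ofReal (len n) := by
  rw [dI, Real.volume_Ico, len]
  ring_nf

lemma volume_real_dI (n k : ℤ) : volume.real (dI n k) = len n := by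
  rw [measureReal_def, volume_dI, ENNReal.toReal_ofReal (len_pos n).le]

instance (n k : ℤ) : IsFiniteMeasure (volume.restrict (dI n k)) :=
  Real.isFiniteMeasure_restrict_Ico _ _

lemma dI_left_union_dI_right (n k : ℤ) : dI (n + 1) (2 * k) ∪ dI (n + 1) (2 * k + 1) = dI n k := by
  have h2 : (2 : ℝ) ^ (-n) = 2 * 2 ^ (-(n + 1)) := by
    rw [neg_add, zpow_add₀ two_ne_zero, zpow_neg_one]
    ring
  have hδ : (0 : ℝ) < 2 ^ (-(n + 1)) := zpow_pos two_pos _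
  simp only [dI, Int.cast_add, Int.cast_mul, Int.cast_ofNat, Int.cast_one]
  rw [Ico_union_Ico_eq_Ico (by nlinarith) (by nlinarith), h2]
  congr 1 <;> ring

lemma disjoint_dI_left_dI_right (n k : ℤ) :
    Disjoint (dI (n + 1) (2 * k)) (dI (n + 1) (2 * k + 1)) := by
  rw [disjoint_left]
  intro x hx hx'
  simp only [dI, mem_Ico, Int.cast_add, Int.cast_mul, Int.cast_ofNat, Int.cast_one] at hx hx'
  linarith [hx.2, hx'.1]

lemma le_of_dI_subset_dI {m j n k : ℤ} (h : dI m j ⊆ dI n k) : n ≤ m := by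
  have hvol := measure_mono (μ := volume) h
  rw [volume_dI, volume_dI, ENNReal.ofReal_le_ofReal_iff (len_pos n).le, len, len,
    zpow_le_zpow_iff_right₀ one_lt_two] at hvol
  omega

lemma dI_add_subset_dI_iff (n k j : ℤ) (d : ℕ) :
    dI (n + d) j ⊆ dI n k ↔ k * 2 ^ d ≤ j ∧ j + 1 ≤ (k + 1) * 2 ^ d := by
  set δ : ℝ := 2 ^ (-(n + d))
  have hδ : 0 < δ := zpow_pos two_pos _
  have hscale : (2 : ℝ) ^ (-n) = 2 ^ d * δ := by
    rw [← zpow_natCast, ← zpow_add₀ two_ne_zero]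
    ring_nf
  rw [dI, dI, Ico_subset_Ico_iff (by nlinarith), hscale, ← mul_assoc, ← mul_assoc,
    mul_le_mul_iff_of_pos_right hδ, mul_le_mul_iff_of_pos_right hδ]
  norm_cast

/-- `dyadicTree N (n, k)` contains the dyadic subintervals of `dI n k` of generation `< n + N`. -/
def dyadicTree : ℕ → ℤ × ℤ → Finset (ℤ × ℤ)
  | 0, _ => ∅
  | N + 1, p => insert p (dyadicTree N (p.1 + 1, 2 * p.2) ∪ dyadicTree N (p.1 + 1, 2 * p.2 + 1))

lemma mem_dyadicTree {d N : ℕ} (hdN : d < N) {n k j : ℤ} (hk : k * 2 ^ d ≤ j)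
    (hk' : j + 1 ≤ (k + 1) * 2 ^ d) : (n + d, j) ∈ dyadicTree N (n, k) := by
  induction d generalizing N n k with
  | zero =>
    obtain ⟨N, rfl⟩ : ∃ N', N = N' + 1 := ⟨N - 1, by omega⟩
    have hj : j = k := by simp only [pow_zero, mul_one] at hk hk'; omega
    simp [dyadicTree, hj]
  | succ d ih =>
    obtain ⟨N, rfl⟩ : ∃ N', N = N' + 1 := ⟨N - 1, by omega⟩
    have hgen : n + ((d + 1 : ℕ) : ℤ) = n + 1 + d := by push_cast; ring
    rw [dyadicTree, hgen, Finset.mem_insert, Finset.mem_union]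
    rw [pow_succ] at hk hk'
    right
    rcases lt_or_ge j ((2 * k + 1) * 2 ^ d) with hleft | hright
    · left
      exact ih (by omega) (by linarith) (by linarith)
    · right
      exact ih (by omega) (by linarith) (by linarith)

lemma Finset.sum_union_le_sum_add_sum {ι M : Type*} [DecidableEq ι] [AddCommMonoid M]
    [PartialOrder M] [IsOrderedAddMonoid M] {f : ι → M} (hf : ∀ i, 0 ≤ f i) (s t : Finset ι) :
    ∑ i ∈ s ∪ t, f i ≤ ∑ i ∈ s, f i + ∑ i ∈ t, f i := by
  rw [← Finset.sum_union_inter]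
  exact le_add_of_nonneg_right (Finset.sum_nonneg fun i _ => hf i)

def dyadicDefect (φ : ℤ × ℤ → ℝ) (p : ℤ × ℤ) : ℝ :=
  φ p - φ (p.1 + 1, 2 * p.2) - φ (p.1 + 1, 2 * p.2 + 1)

lemma sum_dyadicDefect_dyadicTree_le {φ : ℤ × ℤ → ℝ} (hφ : ∀ p, 0 ≤ φ p)
    (hdefect : ∀ p, 0 ≤ dyadicDefect φ p) (N : ℕ) (p : ℤ × ℤ) :
    ∑ q ∈ dyadicTree N p, dyadicDefect φ q ≤ φ p := by
  induction N generalizing p with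
  | zero => simpa [dyadicTree] using hφ p
  | succ N ih =>
    set L := dyadicTree N (p.1 + 1, 2 * p.2)
    set R := dyadicTree N (p.1 + 1, 2 * p.2 + 1)
    calc ∑ q ∈ dyadicTree (N + 1) p, dyadicDefect φ q
        ≤ dyadicDefect φ p + (∑ q ∈ L, dyadicDefect φ q + ∑ q ∈ R, dyadicDefect φ q) := by
          rw [dyadicTree, Finset.insert_eq]
          refine (Finset.sum_union_le_sum_add_sum hdefect _ _).trans ?_
          rw [Finset.sum_singleton]
          gcongr
          exact Finset.sum_union_le_sum_add_sum hdefect _ _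
      _ ≤ dyadicDefect φ p + (φ (p.1 + 1, 2 * p.2) + φ (p.1 + 1, 2 * p.2 + 1)) := by
          gcongr <;> exact ih _
      _ = φ p := by rw [dyadicDefect]; ring

lemma sum_dyadicDefect_le {φ : ℤ × ℤ → ℝ} (hφ : ∀ p, 0 ≤ φ p)
    (hdefect : ∀ p, 0 ≤ dyadicDefect φ p) (n k : ℤ)
    (s : Finset {p : ℤ × ℤ // dI p.1 p.2 ⊆ dI n k}) :
    ∑ I ∈ s, dyadicDefect φ I ≤ φ (n, k) := by
  set D := s.sup fun I => (I.1.1 - n).toNat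
  have hsub : s.map (Function.Embedding.subtype _) ⊆ dyadicTree (D + 1) (n, k) := by
    intro p hp
    obtain ⟨⟨⟨m, j⟩, hI⟩, hIs, rfl⟩ := Finset.mem_map.1 hp
    have hdepth : (m - n).toNat ≤ D := Finset.le_sup (f := fun I => (I.1.1 - n).toNat) hIs
    obtain ⟨d, rfl⟩ : ∃ d : ℕ, m = n + d := ⟨(m - n).toNat, by have := le_of_dI_subset_dI hI; omega⟩
    obtain ⟨hk, hk'⟩ := (dI_add_subset_dI_iff n k j d).1 hI
    exact mem_dyadicTree (by omega) hk hk'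
  calc ∑ I ∈ s, dyadicDefect φ I
      = ∑ p ∈ s.map (Function.Embedding.subtype _), dyadicDefect φ p := by
        rw [Finset.sum_map]; rfl
    _ ≤ ∑ p ∈ dyadicTree (D + 1) (n, k), dyadicDefect φ p :=
        Finset.sum_le_sum_of_subset_of_nonneg hsub fun p _ _ => hdefect p
    _ ≤ φ (n, k) := sum_dyadicDefect_dyadicTree_le hφ hdefect _ _

/-- Cauchy–Schwarz for `f^{1/2}` and `f^{-1/2}`: the quadratic `t ↦ ∫ (t f - 1)² / f` is
nonnegative, so its discriminant is not. -/
lemma sq_measureReal_univ_le_integral_mul_integral_inv {α : Type*} [MeasurableSpace α]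
    {μ : Measure α} [IsFiniteMeasure μ] {f : α → ℝ} (hf_pos : ∀ᵐ x ∂μ, 0 < f x)
    (hf : Integrable f μ) (hf_inv : Integrable (fun x => (f x)⁻¹) μ) :
    μ.real univ ^ 2 ≤ (∫ x, f x ∂μ) * ∫ x, (f x)⁻¹ ∂μ := by
  have hquad : ∀ t : ℝ,
      0 ≤ (∫ x, f x ∂μ) * (t * t) + (-2 * μ.real univ) * t + ∫ x, (f x)⁻¹ ∂μ := by
    intro t
    have hpointwise : ∀ᵐ x ∂μ, 0 ≤ f x * (t * t) + -2 * t + (f x)⁻¹ :=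
      hf_pos.mono fun x hx => by
        have hsq : f x * (t * t) + -2 * t + (f x)⁻¹ = (f x * t - 1) ^ 2 / f x := by
          field_simp
          ring
        rw [hsq]
        positivity
    have hint := integral_nonneg_of_ae hpointwise
    rw [integral_add (f := fun x => f x * (t * t) + -2 * t)
        ((hf.mul_const _).add (integrable_const _)) hf_inv,
      integral_add (hf.mul_const _) (integrable_const _), integral_mul_const, integral_const,
      smul_eq_mul] at hint
    linarith
  have hdiscrim := discrim_le_zero hquad
  rw [discrim] at hdiscrim
  nlinarith

section Averages

variable {w : ℝ → ℝ}

lemma integrableOn_dI (hloc : LocallyIntegrable w volume) (n k : ℤ) :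
    IntegrableOn w (dI n k) volume :=
  (hloc.integrableOn_isCompact isCompact_Icc).mono_set Ico_subset_Icc_self

lemma avg_eq_avgL_add_avgR_div_two (hloc : LocallyIntegrable w volume) (n k : ℤ) :
    avg w n k = (avgL w n k + avgR w n k) / 2 := by
  rw [avgL, avgR, avg, avg, avg, ← dI_left_union_dI_right n k,
    setIntegral_union (disjoint_dI_left_dI_right n k) measurableSet_Ico
      (integrableOn_dI hloc _ _) (integrableOn_dI hloc _ _), zpow_add_one₀ two_ne_zero]
  ring

lemma avg_pos (hpos : ∀ x, 0 < w x) (hloc : LocallyIntegrable w volume) (n k : ℤ) :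
    0 < avg w n k := by
  refine mul_pos (zpow_pos two_pos n) ?_
  rw [setIntegral_pos_iff_support_of_nonneg_ae (.of_forall fun x => (hpos x).le)
    (integrableOn_dI hloc n k), Function.support_eq_univ fun x => (hpos x).ne', univ_inter,
    volume_dI, ENNReal.ofReal_pos]
  exact len_pos n

lemma one_le_avg_mul_avg_inv (hpos : ∀ x, 0 < w x) (hloc : LocallyIntegrable w volume)
    (hloc' : LocallyIntegrable (inv' w) volume) (n k : ℤ) :
    1 ≤ avg w n k * avg (inv' w) n k := by
  have hCS := sq_measureReal_univ_le_integral_mul_integral_inv (μ := volume.restrict (dI n k))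
    (.of_forall hpos) (integrableOn_dI hloc n k) (integrableOn_dI hloc' n k)
  rw [measureReal_restrict_apply_univ, volume_real_dI] at hCS
  calc 1 = ((2 : ℝ) ^ n * len n) ^ 2 := by rw [two_zpow_mul_len, one_pow]
    _ ≤ (2 : ℝ) ^ n * (2 : ℝ) ^ n * ((∫ x in dI n k, w x) * ∫ x in dI n k, (w x)⁻¹) := by
        rw [mul_pow, sq ((2 : ℝ) ^ n)]
        gcongr
    _ = avg w n k * avg (inv' w) n k := by simp only [avg, inv']; ring

end Averages

lemma log_add_log_add_sq_le_two_mul_log_half_add {a b : ℝ} (ha : 0 < a) (hb : 0 < b) :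
    Real.log a + Real.log b + ((a - b) / (a + b)) ^ 2 ≤ 2 * Real.log ((a + b) / 2) := by
  set t := (a - b) / (a + b)
  have hprod : a * b = ((a + b) / 2) ^ 2 * (1 - t ^ 2) := by
    simp only [t]
    field_simp
    ring
  have ht : 0 < 1 - t ^ 2 := by
    have : 0 < ((a + b) / 2) ^ 2 * (1 - t ^ 2) := hprod ▸ mul_pos ha hb
    exact pos_of_mul_pos_right this (by positivity)
  have hlog := Real.log_le_sub_one_of_pos ht
  rw [← Real.log_mul ha.ne' hb.ne', hprod, Real.log_mul (by positivity) ht.ne', Real.log_pow]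
  push_cast
  linarith

def bellman (w : ℝ → ℝ) (p : ℤ × ℤ) : ℝ :=
  len p.1 * Real.log (avg w p.1 p.2 * avg (inv' w) p.1 p.2)

section Bellman

variable {w : ℝ → ℝ}

lemma bellman_nonneg (hpos : ∀ x, 0 < w x) (hloc : LocallyIntegrable w volume)
    (hloc' : LocallyIntegrable (inv' w) volume) (p : ℤ × ℤ) : 0 ≤ bellman w p :=
  mul_nonneg (len_pos _).le (Real.log_nonneg (one_le_avg_mul_avg_inv hpos hloc hloc' _ _))

lemma bellman_le_len_mul_log_A2d (hpos : ∀ x, 0 < w x) (hloc : LocallyIntegrable w volume)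
    (hloc' : LocallyIntegrable (inv' w) volume)
    (hbdd : BddAbove (range fun p : ℤ × ℤ => avg w p.1 p.2 * avg (inv' w) p.1 p.2))
    (n k : ℤ) : bellman w (n, k) ≤ len n * Real.log (A2d w) := by
  refine mul_le_mul_of_nonneg_left (Real.log_le_log ?_ (le_ciSup hbdd (n, k))) (len_pos n).le
  exact one_pos.trans_le (one_le_avg_mul_avg_inv hpos hloc hloc' n k)

lemma len_mul_sq_le_two_mul_dyadicDefect_bellman (hpos : ∀ x, 0 < w x)
    (hloc : LocallyIntegrable w volume) (hloc' : LocallyIntegrable (inv' w) volume) (n k : ℤ) :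
    len n * ((avgL w n k - avgR w n k) / (2 * avg w n k)) ^ 2 ≤
      2 * dyadicDefect (bellman w) (n, k) := by
  have hpos' : ∀ x, 0 < inv' w x := fun x => inv_pos.mpr (hpos x)
  have hu := avg_pos hpos hloc n k
  have huL := avg_pos hpos hloc (n + 1) (2 * k)
  have huR := avg_pos hpos hloc (n + 1) (2 * k + 1)
  have hv := avg_pos hpos' hloc' n k
  have hvL := avg_pos hpos' hloc' (n + 1) (2 * k)
  have hvR := avg_pos hpos' hloc' (n + 1) (2 * k + 1)
  have hw := log_add_log_add_sq_le_two_mul_log_half_add huL huR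
  have hw' := log_add_log_add_sq_le_two_mul_log_half_add hvL hvR
  rw [← avgL, ← avgR, ← avg_eq_avgL_add_avgR_div_two hloc] at hw
  rw [← avgL, ← avgR, ← avg_eq_avgL_add_avgR_div_two hloc'] at hw'
  have htwo : 2 * avg w n k = avgL w n k + avgR w n k := by
    rw [avg_eq_avgL_add_avgR_div_two hloc]
    ring
  calc len n * ((avgL w n k - avgR w n k) / (2 * avg w n k)) ^ 2
      ≤ len n * (2 * Real.log (avg w n k) - Real.log (avgL w n k) - Real.log (avgR w n k) +
          (2 * Real.log (avg (inv' w) n k) - Real.log (avgL (inv' w) n k) -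
            Real.log (avgR (inv' w) n k))) := by
        rw [htwo]
        refine mul_le_mul_of_nonneg_left ?_ (len_pos n).le
        nlinarith [sq_nonneg ((avgL (inv' w) n k - avgR (inv' w) n k) /
          (avgL (inv' w) n k + avgR (inv' w) n k))]
    _ = 2 * dyadicDefect (bellman w) (n, k) := by
        simp only [dyadicDefect, bellman, len_add_one]
        rw [Real.log_mul hu.ne' hv.ne', Real.log_mul huL.ne' hvL.ne',
          Real.log_mul huR.ne' hvR.ne', avgL, avgR, avgL, avgR]
        ring

lemma dyadicDefect_bellman_nonneg (hpos : ∀ x, 0 < w x) (hloc : LocallyIntegrable w volume)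
    (hloc' : LocallyIntegrable (inv' w) volume) (p : ℤ × ℤ) :
    0 ≤ dyadicDefect (bellman w) p := by
  have hc := len_mul_sq_le_two_mul_dyadicDefect_bellman hpos hloc hloc' p.1 p.2
  have : 0 ≤ len p.1 * ((avgL w p.1 p.2 - avgR w p.1 p.2) / (2 * avg w p.1 p.2)) ^ 2 :=
    mul_nonneg (len_pos _).le (sq_nonneg _)
  linarith

end Bellman

/-- `{c_I²}` is a Carleson sequence with constant `2 log [w]_{A₂ᵈ}`. -/
theorem cI_sq_carleson (w : ℝ → ℝ) (hpos : ∀ x, 0 < w x)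
    (hloc : LocallyIntegrable w volume) (hloc' : LocallyIntegrable (inv' w) volume)
    (hbdd : BddAbove (Set.range fun p : ℤ × ℤ => avg w p.1 p.2 * avg (inv' w) p.1 p.2))
    (n k : ℤ) :
    (len n)⁻¹ * ∑' I : {p : ℤ × ℤ // dI p.1 p.2 ⊆ dI n k},
        len I.1.1 * ((avgL w I.1.1 I.1.2 - avgR w I.1.1 I.1.2) / (2 * avg w I.1.1 I.1.2)) ^ 2 ≤
      2 * Real.log (A2d w) := by
  have hsum : ∑' I : {p : ℤ × ℤ // dI p.1 p.2 ⊆ dI n k},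
      len I.1.1 * ((avgL w I.1.1 I.1.2 - avgR w I.1.1 I.1.2) / (2 * avg w I.1.1 I.1.2)) ^ 2 ≤
        2 * bellman w (n, k) := by
    refine Real.tsum_le_of_sum_le (fun I => mul_nonneg (len_pos _).le (sq_nonneg _)) fun s => ?_
    calc _ ≤ ∑ I ∈ s, 2 * dyadicDefect (bellman w) I := Finset.sum_le_sum fun I _ =>
          len_mul_sq_le_two_mul_dyadicDefect_bellman hpos hloc hloc' _ _
      _ = 2 * ∑ I ∈ s, dyadicDefect (bellman w) I := (Finset.mul_sum _ _ _).symm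
      _ ≤ 2 * bellman w (n, k) := by
          gcongr
          exact sum_dyadicDefect_le (bellman_nonneg hpos hloc hloc')
            (dyadicDefect_bellman_nonneg hpos hloc hloc') n k s
  have hlen_inv : 0 ≤ (len n)⁻¹ := (inv_pos.2 (len_pos n)).le
  calc _ ≤ (len n)⁻¹ * (2 * bellman w (n, k)) := by gcongr
    _ ≤ (len n)⁻¹ * (2 * (len n * Real.log (A2d w))) := by
        gcongr
        exact bellman_le_len_mul_log_A2d hpos hloc hloc' hbdd n k
    _ = 2 * Real.log (A2d w) := by field_simp [(len_pos n).ne']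
end
end

section
/- If B: D → ℝ satisfies 0 ≤ B ≤ (1+ε)√(XY) on a convex domain D ⊂ ℝ⁶ (coordinates (X,Y,x,y,r,s)) and the midpoint concavity condition B(v) − (B(v⁺)+B(v⁻))/2 ≥ (1/4)|x⁺ − x⁻||y⁺ − y⁻| whenever v, v⁺, v⁻ ∈ D and v = (v⁺+v⁻)/2, then the mollification B_ε = B ∗ S_ε (where S_ε is a smooth approximate identity supported in the ε-ball) satisfies, on any compact subset of the interior of D at distance > ε from ∂D, the Hessian inequality (−d²B_ε u, u) ≥ 2|u₃ u₄| for all u ∈ ℝ⁶. -/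
open MeasureTheory Set Filter Metric
open scoped Convolution
noncomputable section

/-- The state space `ℝ⁶` of the Bellman function, coordinates `(X,Y,x,y,r,s)`. -/
abbrev E6 := EuclideanSpace ℝ (Fin 6)

/-- The mollification `B ∗ S_ε` where `S_ε(x) = ε⁻⁶ S(x/ε)`. -/
def mollify (B S : E6 → ℝ) (ε : ℝ) : E6 → ℝ := fun x =>
  ∫ y, B (x - y) * (ε ^ (6 : ℕ))⁻¹ * S (ε⁻¹ • y)

lemma aux_second_deriv_le {g : ℝ → ℝ} {K δ : ℝ} (hg : ContDiff ℝ 2 g) (hδ : 0 < δ)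
    (h : ∀ t ∈ Set.Ioo (0:ℝ) δ, g t + g (-t) - 2 * g 0 ≤ -(K * t ^ 2)) :
    deriv (deriv g) 0 ≤ -K := by
  have hgd : Differentiable ℝ g := hg.differentiable two_ne_zero
  have hdg : ContDiff ℝ 1 (deriv g) := by
    have h1 : ContDiff ℝ 1 (fun t => fderiv ℝ g t 1) :=
      (hg.fderiv_right (m := 1) (by norm_num)).clm_apply contDiff_const
    exact h1
  have hdgd : Differentiable ℝ (deriv g) := hdg.differentiable one_ne_zero
  have hddg : Continuous (deriv (deriv g)) := by
    have h1 : ContDiff ℝ 0 (fun t => fderiv ℝ (deriv g) t 1) :=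
      (hdg.fderiv_right (m := 0) (by norm_num)).clm_apply contDiff_const
    exact h1.continuous
  by_contra hc
  push_neg at hc
  have hmem : (deriv (deriv g)) ⁻¹' Ioi (-K) ∈ nhds (0:ℝ) :=
    hddg.continuousAt.preimage_mem_nhds (Ioi_mem_nhds hc)
  obtain ⟨r, hr, hrsub⟩ := Metric.mem_nhds_iff.mp hmem
  set t := min (δ/2) (r/2) with htdef
  have ht0 : 0 < t := lt_min (by linarith) (by linarith)
  have htδ : t < δ := lt_of_le_of_lt (min_le_left _ _) (by linarith)
  have htr : t < r := lt_of_le_of_lt (min_le_right _ _) (by linarith)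
  set F : ℝ → ℝ := fun s => g s + g (-s) - 2 * g 0 with hFdef
  have hF' : ∀ s : ℝ, HasDerivAt F (deriv g s - deriv g (-s)) s := by
    intro s
    have h1 : HasDerivAt g (deriv g s) s := (hgd s).hasDerivAt
    have h2 : HasDerivAt (fun y : ℝ => g (-y)) (deriv g (-s) * (-1)) s :=
      HasDerivAt.comp s (hgd (-s)).hasDerivAt (hasDerivAt_neg s)
    have := (h1.add h2).sub_const (2 * g 0)
    convert this using 1
    · rfl
    · rfl
    · rfl
    ring
  obtain ⟨c, hc1, hc2⟩ :=
    exists_ratio_hasDerivAt_eq_ratio_slope F (fun s => deriv g s - deriv g (-s)) ht0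
      (Continuous.continuousOn (by fun_prop)) (fun s _ => hF' s)
      (fun s => s ^ 2) (fun s => 2 * s) (Continuous.continuousOn (by continuity))
      (fun s _ => by simpa using (hasDerivAt_pow 2 s))
  have hF0 : F 0 = 0 := by simp only [hFdef, neg_zero]; ring
  have hFt : F t ≤ -(K * t ^ 2) := h t ⟨ht0, htδ⟩
  have hc0 : 0 < c := hc1.1
  have hct : c < t := hc1.2
  have hFc : deriv g c - deriv g (-c) ≤ -(K * (2 * c)) := by
    have ht2 : (0:ℝ) < t ^ 2 := by positivity
    nlinarith [hc2, hFt, hF0, mul_le_mul_of_nonneg_right hFt (by linarith : (0:ℝ) ≤ 2 * c)]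
  have hcc : (-c) < c := by linarith
  obtain ⟨η, hη1, hη2⟩ :=
    exists_hasDerivAt_eq_slope (deriv g) (deriv (deriv g)) hcc
      (Continuous.continuousOn (by fun_prop))
      (fun s _ => (hdgd s).hasDerivAt)
  have hηbd : deriv (deriv g) η ≤ -K := by
    rw [hη2]
    rw [div_le_iff₀ (by linarith : (0:ℝ) < c - -c)]
    nlinarith [hFc]
  have hηr : η ∈ Metric.ball (0:ℝ) r := by
    simp only [Metric.mem_ball, Real.dist_eq, sub_zero]
    rw [abs_lt]
    constructor <;> [linarith [hη1.1]; linarith [hη1.2]]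
  have := hrsub hηr
  simp only [mem_preimage, mem_Ioi] at this
  linarith

lemma aux_coord_le_norm (v : E6) (i : Fin 6) : |v i| ≤ ‖v‖ := by
  have := EuclideanSpace.norm_eq v
  rw [this]
  have h1 : |v i| = Real.sqrt ((v i) ^ 2) := (Real.sqrt_sq_eq_abs _).symm
  rw [h1]
  apply Real.sqrt_le_sqrt
  have : (v i) ^ 2 ≤ ∑ j, (v j) ^ 2 :=
    Finset.single_le_sum (f := fun j => (v j) ^ 2) (fun j _ => sq_nonneg _) (Finset.mem_univ i)
  simpa [Real.norm_eq_abs, sq_abs] using this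

lemma aux_B_bound {D : Set E6} (ε' : ℝ) (hε' : 0 ≤ ε') {B : E6 → ℝ}
    (hB0 : ∀ v ∉ D, B v = 0)
    (hBbd : ∀ v ∈ D, 0 ≤ B v ∧ B v ≤ (1 + ε') * Real.sqrt (v 0 * v 1)) (v : E6) :
    ‖B v‖ ≤ (1 + ε') * ‖v‖ := by
  by_cases hv : v ∈ D
  · obtain ⟨h1, h2⟩ := hBbd v hv
    rw [Real.norm_eq_abs, abs_of_nonneg h1]
    refine h2.trans ?_
    apply mul_le_mul_of_nonneg_left _ (by linarith)
    have h3 : v 0 * v 1 ≤ ‖v‖ * ‖v‖ := by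
      calc v 0 * v 1 ≤ |v 0 * v 1| := le_abs_self _
        _ = |v 0| * |v 1| := abs_mul _ _
        _ ≤ ‖v‖ * ‖v‖ :=
          mul_le_mul (aux_coord_le_norm v 0) (aux_coord_le_norm v 1) (abs_nonneg _) (norm_nonneg _)
    calc Real.sqrt (v 0 * v 1) ≤ Real.sqrt (‖v‖ * ‖v‖) := Real.sqrt_le_sqrt h3
      _ = ‖v‖ := Real.sqrt_mul_self (norm_nonneg _)
  · simp only [hB0 v hv, norm_zero]
    positivity

/-- if `0 ≤ B ≤ (1+ε')√(XY)` on a convex domain `D ⊆ ℝ⁶` and `B` is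
midpoint concave with gain `(1/4)|x⁺−x⁻||y⁺−y⁻|`, then its mollification `B ∗ S_ε`
satisfies `(−d²(B∗S_ε) u, u) ≥ 2|u₃u₄|` at every point lying at distance `> ε` from the
complement of `D` (hence on any compact subset of the interior of `D` at distance `> ε`
from `∂D`). -/
theorem mollified_bellman_hessian (D : Set E6) (hD : IsOpen D) (hDc : Convex ℝ D)
    (ε' : ℝ) (hε' : 0 ≤ ε') (B : E6 → ℝ) (hBmeas : Measurable B)
    (hB0 : ∀ v ∉ D, B v = 0)
    (hBbd : ∀ v ∈ D, 0 ≤ B v ∧ B v ≤ (1 + ε') * Real.sqrt (v 0 * v 1))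
    (hBconc : ∀ vp ∈ D, ∀ vm ∈ D, midpoint ℝ vp vm ∈ D →
      (1 / 4) * |vp 2 - vm 2| * |vp 3 - vm 3| ≤
        B (midpoint ℝ vp vm) - (B vp + B vm) / 2)
    (S : E6 → ℝ) (hS : ContDiff ℝ (⊤ : ℕ∞) S) (hSsupp : Function.support S ⊆ Metric.ball 0 1)
    (hSpos : ∀ x, 0 ≤ S x) (hSint : ∫ x, S x = 1)
    (ε : ℝ) (hε : 0 < ε) :
    ∀ x : E6, Metric.closedBall x ε ⊆ D → ∀ u : E6,
      2 * |u 2 * u 3| ≤ -(fderiv ℝ (fun z => fderiv ℝ (mollify B S ε) z u) x u) := by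
  intro x hx u
  have hS' : ContDiff ℝ (⊤ : ℕ∞) S := hS.of_le (by simp)
  have hεpow : (0:ℝ) < ε ^ (6:ℕ) := pow_pos hε 6
  set φ : E6 → ℝ := fun y => (ε ^ (6:ℕ))⁻¹ * S (ε⁻¹ • y) with hφdef
  have hφsmooth : ContDiff ℝ (⊤ : ℕ∞) φ :=
    contDiff_const.mul (hS'.comp (contDiff_const_smul ε⁻¹))
  have hφcont : Continuous φ := hφsmooth.continuous
  have hφsupp : Function.support φ ⊆ ball (0:E6) ε := by
    intro y hy
    have hy' : S (ε⁻¹ • y) ≠ 0 := by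
      intro h0
      apply hy
      simp [hφdef, h0]
    have h1 := hSsupp (Function.mem_support.2 hy')
    rw [mem_ball_zero_iff] at h1 ⊢
    rw [norm_smul, Real.norm_eq_abs, abs_of_nonneg (inv_nonneg.2 hε.le)] at h1
    calc ‖y‖ = ε * (ε⁻¹ * ‖y‖) := by field_simp
      _ < ε * 1 := by exact mul_lt_mul_of_pos_left h1 hε
      _ = ε := mul_one ε
  have hφcpt : HasCompactSupport φ := by
    have hsub : tsupport φ ⊆ closedBall (0:E6) ε :=
      (closure_mono hφsupp).trans closure_ball_subset_closedBall
    exact IsCompact.of_isClosed_subset (isCompact_closedBall 0 ε) isClosed_closure hsub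
  have hφnonneg : ∀ y, 0 ≤ φ y := fun y => mul_nonneg (inv_nonneg.2 hεpow.le) (hSpos _)
  have hφint1 : Integrable φ volume := hφcont.integrable_of_hasCompactSupport hφcpt
  have hφint : ∫ y, φ y = 1 := by
    rw [hφdef]
    simp only
    rw [integral_const_mul]
    rw [MeasureTheory.Measure.integral_comp_inv_smul volume S ε]
    rw [finrank_euclideanSpace_fin, hSint]
    rw [abs_of_nonneg (pow_nonneg hε.le 6)]
    simp only [smul_eq_mul, mul_one]
    field_simp
  have hBloc : LocallyIntegrable B volume := by
    rw [MeasureTheory.locallyIntegrable_iff]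
    intro k hk
    obtain ⟨R, hR⟩ := hk.isBounded.subset_closedBall 0
    apply Measure.integrableOn_of_bounded (M := (1 + ε') * (|R| + 1)) hk.measure_lt_top.ne
      hBmeas.aestronglyMeasurable
    apply ae_restrict_of_forall_mem hk.measurableSet
    intro v hv
    have h1 : ‖v‖ ≤ |R| := by
      have := hR hv
      rw [mem_closedBall_zero_iff] at this
      exact this.trans (le_abs_self R)
    calc ‖B v‖ ≤ (1 + ε') * ‖v‖ := aux_B_bound ε' hε' hB0 hBbd v
      _ ≤ (1 + ε') * (|R| + 1) := by
        apply mul_le_mul_of_nonneg_left (by linarith) (by linarith)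
  have hconv : mollify B S ε = φ ⋆[ContinuousLinearMap.mul ℝ ℝ, volume] B := by
    funext z
    rw [MeasureTheory.convolution_def]
    simp only [ContinuousLinearMap.mul_apply', mollify, hφdef]
    apply integral_congr_ae
    filter_upwards with y
    ring
  have hsmooth : ContDiff ℝ (⊤ : ℕ∞) (mollify B S ε) := by
    rw [hconv]
    exact hφcpt.contDiff_convolution_left _ hφsmooth hBloc
  have hInt : ∀ x' : E6, Integrable (fun y => φ y * B (x' - y)) volume := by
    intro x'
    have h1 := (hφcpt.convolutionExists_left (ContinuousLinearMap.mul ℝ ℝ) hφcont hBloc) x'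
    simpa [ConvolutionExistsAt, ContinuousLinearMap.mul_apply'] using h1
  have hmolval : ∀ x' : E6, mollify B S ε x' = ∫ y, φ y * B (x' - y) := by
    intro x'
    simp only [mollify, hφdef]
    apply integral_congr_ae
    filter_upwards with y
    ring
  obtain ⟨δ, hδpos, hδsub⟩ :=
    (isCompact_closedBall x ε).exists_cthickening_subset_open hD hx
  have hball : ∀ z : E6, dist z x ≤ δ → closedBall z ε ⊆ D := by
    intro z hz
    have h1 : closedBall z ε ⊆ closedBall x (δ + ε) :=
      closedBall_subset_closedBall' (by linarith [dist_comm z x] : ε + dist z x ≤ δ + ε)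
    refine h1.trans ?_
    rw [← cthickening_closedBall hδpos.le (le_of_lt hε) x]
    exact hδsub
  set c : ℝ := |u 2 * u 3| with hcdef
  set g : ℝ → ℝ := fun t => mollify B S ε (x + t • u) with hgdef
  have hline : ContDiff ℝ (⊤ : ℕ∞) (fun t : ℝ => x + t • u) :=
    contDiff_const.add (contDiff_id.smul contDiff_const)
  have hg2 : ContDiff ℝ 2 g := (hsmooth.comp hline).of_le (by rw [show ((2:WithTop ℕ∞)) = ((2:ℕ∞):WithTop ℕ∞) from rfl]; exact WithTop.coe_le_coe.2 le_top)
  set δ' : ℝ := δ / (‖u‖ + 1) with hδ'def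
  have hδ'pos : 0 < δ' := div_pos hδpos (by positivity)
  have key : ∀ t ∈ Set.Ioo (0:ℝ) δ', g t + g (-t) - 2 * g 0 ≤ -((2 * c) * t ^ 2) := by
    intro t ht
    obtain ⟨ht0, htδ'⟩ := ht
    have htu : ∀ s : ℝ, |s| ≤ t → dist (x + s • u) x ≤ δ := by
      intro s hs
      rw [dist_eq_norm]
      have he : x + s • u - x = s • u := by abel
      rw [he, norm_smul, Real.norm_eq_abs]
      have h1 : |s| * ‖u‖ ≤ t * (‖u‖ + 1) := by
        apply mul_le_mul hs (by linarith) (norm_nonneg _) (by linarith [abs_nonneg s])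
      have h2 : t * (‖u‖ + 1) ≤ δ := by
        rw [hδ'def, div_eq_mul_inv] at htδ'
        have hu1 : (0:ℝ) < ‖u‖ + 1 := by positivity
        calc t * (‖u‖ + 1) ≤ (δ * (‖u‖ + 1)⁻¹) * (‖u‖ + 1) :=
              mul_le_mul_of_nonneg_right htδ'.le hu1.le
          _ = δ := by field_simp
      linarith
    have hp : closedBall (x + t • u) ε ⊆ D := hball _ (htu t (le_of_eq (abs_of_pos ht0)))
    have hm : closedBall (x + (-t) • u) ε ⊆ D :=
      hball _ (htu (-t) (le_of_eq (abs_neg t ▸ abs_of_pos ht0)))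
    have hpt : ∀ y : E6,
        φ y * B (x + t • u - y) + φ y * B (x + (-t) • u - y) - 2 * (φ y * B (x - y))
          ≤ φ y * (-((2 * c) * t ^ 2)) := by
      intro y
      by_cases hy : φ y = 0
      · simp [hy]
      · have hyb : y ∈ ball (0:E6) ε := hφsupp (Function.mem_support.2 hy)
        rw [mem_ball_zero_iff] at hyb
        set vp := x + t • u - y with hvpdef
        set vm := x + (-t) • u - y with hvmdef
        have hdist : ∀ z : E6, dist (z - y) z ≤ ε := by
          intro z
          rw [dist_eq_norm]
          have he : z - y - z = -y := by abel
          rw [he, norm_neg]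
          exact hyb.le
        have hvp : vp ∈ D := hp (by rw [mem_closedBall]; exact hdist _)
        have hvm : vm ∈ D := hm (by rw [mem_closedBall]; exact hdist _)
        have hmidD : x - y ∈ D := hx (by rw [mem_closedBall]; exact hdist _)
        have hmid : midpoint ℝ vp vm = x - y := by
          rw [midpoint_eq_smul_add, invOf_eq_inv]
          have hsum : vp + vm = (2:ℝ) • (x - y) := by
            rw [hvpdef, hvmdef]
            module
          rw [hsum, smul_smul]
          norm_num
        have hcoord2 : vp 2 - vm 2 = 2 * t * u 2 := by
          simp only [hvpdef, hvmdef, PiLp.sub_apply, PiLp.add_apply, PiLp.smul_apply,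
            smul_eq_mul]
          ring
        have hcoord3 : vp 3 - vm 3 = 2 * t * u 3 := by
          simp only [hvpdef, hvmdef, PiLp.sub_apply, PiLp.add_apply, PiLp.smul_apply,
            smul_eq_mul]
          ring
        have hconc := hBconc vp hvp vm hvm (hmid ▸ hmidD)
        rw [hmid, hcoord2, hcoord3] at hconc
        have habs : (1/4 : ℝ) * |2 * t * u 2| * |2 * t * u 3| = t ^ 2 * c := by
          rw [hcdef, abs_mul, abs_mul, abs_mul, abs_mul, abs_mul]
          rw [abs_of_pos ht0]
          norm_num
          ring
        rw [habs] at hconc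
        have hBineq : B vp + B vm - 2 * B (x - y) ≤ -((2 * c) * t ^ 2) := by linarith
        have hmul := mul_le_mul_of_nonneg_left hBineq (hφnonneg y)
        nlinarith [hmul]
    have h1 := hInt (x + t • u)
    have h2 := hInt (x + (-t) • u)
    have h3 := hInt x
    have hLHS : Integrable (fun y =>
        φ y * B (x + t • u - y) + φ y * B (x + (-t) • u - y) - 2 * (φ y * B (x - y)))
        volume := (h1.add h2).sub (h3.const_mul 2)
    have hRHS : Integrable (fun y => φ y * (-((2 * c) * t ^ 2))) volume :=
      hφint1.mul_const _
    have hmono := integral_mono hLHS hRHS hpt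
    have hAdd : ∫ y, (φ y * B (x + t • u - y) + φ y * B (x + (-t) • u - y)) =
        (∫ y, φ y * B (x + t • u - y)) + ∫ y, φ y * B (x + (-t) • u - y) :=
      integral_add h1 h2
    have hCmul : ∫ y, 2 * (φ y * B (x - y)) = 2 * ∫ y, φ y * B (x - y) :=
      integral_const_mul 2 _
    have hSub : ∫ y, (φ y * B (x + t • u - y) + φ y * B (x + (-t) • u - y)
          - 2 * (φ y * B (x - y))) =
        (∫ y, (φ y * B (x + t • u - y) + φ y * B (x + (-t) • u - y)))
          - ∫ y, 2 * (φ y * B (x - y)) :=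
      integral_sub (h1.add h2) (h3.const_mul 2)
    have hconst : ∫ y, φ y * (-((2 * c) * t ^ 2)) = -((2 * c) * t ^ 2) := by
      rw [integral_mul_const, hφint, one_mul]
    have hgt : g t = ∫ y, φ y * B (x + t • u - y) := hmolval _
    have hgmt : g (-t) = ∫ y, φ y * B (x + (-t) • u - y) := hmolval _
    have hg0 : g 0 = ∫ y, φ y * B (x - y) := by
      rw [hgdef]
      simp only [zero_smul, add_zero]
      exact hmolval _
    rw [hSub, hAdd, hCmul, hconst, ← hgt, ← hgmt, ← hg0] at hmono
    linarith
  have hdd := aux_second_deriv_le hg2 hδ'pos key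
  set A : E6 → ℝ := fun z => fderiv ℝ (mollify B S ε) z u with hAdef
  have hA1 : ContDiff ℝ 1 A := by
    have h1 : ContDiff ℝ 1 (fderiv ℝ (mollify B S ε)) :=
      hsmooth.fderiv_right (by rw [show ((1:WithTop ℕ∞)+1) = ((2:ℕ∞):WithTop ℕ∞) from rfl]; exact WithTop.coe_le_coe.2 le_top)
    exact h1.clm_apply contDiff_const
  have hlineD : ∀ t : ℝ, HasDerivAt (fun s : ℝ => x + s • u) u t := by
    intro t
    have h1 : HasDerivAt (fun s : ℝ => s • u) ((1:ℝ) • u) t := (hasDerivAt_id t).smul_const u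
    simpa using h1.const_add x
  have hderivg : deriv g = fun t => A (x + t • u) := by
    funext t
    have hdiff : DifferentiableAt ℝ (mollify B S ε) (x + t • u) :=
      (hsmooth.differentiable (by simp)) _
    exact (hdiff.hasFDerivAt.comp_hasDerivAt t (hlineD t)).deriv
  have hdd2 : deriv (deriv g) 0 = fderiv ℝ A x u := by
    rw [hderivg]
    have hdiffA : DifferentiableAt ℝ A (x + (0:ℝ) • u) := by
      simpa using (hA1.differentiable one_ne_zero) x
    have h1 : HasDerivAt (fun t : ℝ => A (x + t • u)) (fderiv ℝ A (x + (0:ℝ) • u) u) 0 :=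
      hdiffA.hasFDerivAt.comp_hasDerivAt (l := A) 0 (hlineD 0)
    rw [h1.deriv]
    simp
  rw [hdd2, hAdef] at hdd
  linarith
end
end
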